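/- For real a > 0, y > 0, and real η > -1 with η ≠ 0, ∫₀^∞ x^{η-1} e^{-ax} sin(xy) dx = Γ(η) (a² + y²)^{-η/2} sin(η arctan(y/a)). -/

import Mathlib

/-!
Put `z = a - y i`. For `Re s > 0` the Laplace transform `∫ t ^ (s - 1) e ^ (-z t) dt` equals
`Γ(s) z ^ (-s)`: both sides are holomorphic on the right half-plane and agree for real `z`.
Its real and imaginary parts are the integrals of `t ^ η e ^ (-a t)` against `cos (t y)` and
`sin (t y)` for `η = s - 1 > -1`. Integrating by parts against `x ^ η` turns `η` times the
integral in question into `Im (z Γ(η + 1) z ^ (-η - 1)) = Γ(η + 1) Im (z ^ (-η))`, which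
handles `-1 < η < 0` and `η > 0` at once; finally `arg z = -arctan (y / a)`.
-/

open Real Set

open MeasureTheory Filter Complex
open scoped Topology

lemma integrableOn_rpow_mul_exp_neg_mul {s b : ℝ} (hs : -1 < s) (hb : 0 < b) :
    IntegrableOn (fun x : ℝ ↦ x ^ s * Real.exp (-(b * x))) (Ioi 0) := by
  simpa [Real.rpow_one] using integrableOn_rpow_mul_exp_neg_mul_rpow hs one_pos hb

lemma norm_cpow_mul_cexp_neg_mul {t : ℝ} (ht : 0 < t) (s z : ℂ) :
    ‖(t : ℂ) ^ s * cexp (-(z * t))‖ = t ^ s.re * Real.exp (-(z.re * t)) := by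
  rw [norm_mul, norm_cpow_eq_rpow_re_of_pos ht, Complex.norm_exp]
  simp

lemma continuousOn_cpow_mul_cexp_neg_mul (s z : ℂ) :
    ContinuousOn (fun t : ℝ ↦ (t : ℂ) ^ s * cexp (-(z * t))) (Ioi 0) := by
  intro t ht
  exact ((continuousAt_ofReal_cpow_const t s (Or.inr ht.out.ne')).mul
    (by fun_prop)).continuousWithinAt

lemma integrableOn_cpow_mul_cexp_neg_mul {s z : ℂ} (hs : -1 < s.re) (hz : 0 < z.re) :
    IntegrableOn (fun t : ℝ ↦ (t : ℂ) ^ s * cexp (-(z * t))) (Ioi 0) := by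
  refine (integrableOn_rpow_mul_exp_neg_mul hs hz).mono'
    ((continuousOn_cpow_mul_cexp_neg_mul s z).aestronglyMeasurable measurableSet_Ioi) ?_
  filter_upwards [ae_restrict_mem measurableSet_Ioi] with t ht
  exact (norm_cpow_mul_cexp_neg_mul ht s z).le

lemma hasDerivAt_integral_cpow_mul_cexp_neg_mul {s z : ℂ} (hs : 0 < s.re) (hz : 0 < z.re) :
    HasDerivAt (fun w : ℂ ↦ ∫ t in Ioi (0 : ℝ), (t : ℂ) ^ (s - 1) * cexp (-(w * t)))
      (∫ t in Ioi (0 : ℝ), -((t : ℂ) ^ s * cexp (-(z * t)))) z := by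
  have hball : ∀ w ∈ Metric.ball z (z.re / 2), z.re / 2 < w.re := fun w hw ↦ by
    have := (abs_re_le_norm (w - z)).trans_lt (mem_ball_iff_norm.mp hw)
    rw [sub_re, abs_lt] at this
    linarith
  refine (hasDerivAt_integral_of_dominated_loc_of_deriv_le
    (F := fun w t ↦ (t : ℂ) ^ (s - 1) * cexp (-(w * t)))
    (F' := fun w t ↦ -((t : ℂ) ^ s * cexp (-(w * t))))
    (bound := fun t : ℝ ↦ t ^ s.re * Real.exp (-(z.re / 2 * t)))
    (Metric.ball_mem_nhds z (half_pos hz)) ?_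
    (integrableOn_cpow_mul_cexp_neg_mul (by simp [hs]) hz)
    ((continuousOn_cpow_mul_cexp_neg_mul s z).neg.aestronglyMeasurable measurableSet_Ioi) ?_
    (integrableOn_rpow_mul_exp_neg_mul (by linarith) (half_pos hz)) ?_).2
  · filter_upwards [Metric.ball_mem_nhds z (half_pos hz)] with w hw
    exact (continuousOn_cpow_mul_cexp_neg_mul _ w).aestronglyMeasurable measurableSet_Ioi
  · filter_upwards [ae_restrict_mem measurableSet_Ioi] with t (ht : 0 < t) w hw
    rw [norm_neg, norm_cpow_mul_cexp_neg_mul ht]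
    gcongr
    exact (hball w hw).le
  · filter_upwards [ae_restrict_mem measurableSet_Ioi] with t ht w _
    have ht0 : (t : ℂ) ≠ 0 := ofReal_ne_zero.mpr ht.out.ne'
    refine ((((hasDerivAt_id w).mul_const (t : ℂ)).neg.cexp).const_mul
      ((t : ℂ) ^ (s - 1))).congr_deriv ?_
    simp only [Pi.neg_apply, id, cpow_sub _ _ ht0, cpow_one]
    field_simp

theorem integral_cpow_mul_cexp_neg_mul_Ioi {s z : ℂ} (hs : 0 < s.re) (hz : 0 < z.re) :
    ∫ t in Ioi (0 : ℝ), (t : ℂ) ^ (s - 1) * cexp (-(z * t)) = Gamma s * z ^ (-s) := by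
  have hU : IsOpen {w : ℂ | 0 < w.re} := isOpen_lt continuous_const continuous_re
  have hF : AnalyticOnNhd ℂ (fun w : ℂ ↦ ∫ t in Ioi (0 : ℝ), (t : ℂ) ^ (s - 1) * cexp (-(w * t)))
      {w | 0 < w.re} := DifferentiableOn.analyticOnNhd (fun w hw ↦
    (hasDerivAt_integral_cpow_mul_cexp_neg_mul hs hw).differentiableAt.differentiableWithinAt) hU
  have hG : AnalyticOnNhd ℂ (fun w : ℂ ↦ Gamma s * w ^ (-s)) {w | 0 < w.re} :=
    DifferentiableOn.analyticOnNhd (fun w hw ↦ ((differentiableAt_id.cpow_const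
      (Or.inl hw)).const_mul _).differentiableWithinAt) hU
  have h_real : ∀ r : ℝ, 0 < r → ∫ t in Ioi (0 : ℝ), (t : ℂ) ^ (s - 1) * cexp (-((r : ℂ) * t)) =
      Gamma s * (r : ℂ) ^ (-s) := by
    intro r hr
    rw [integral_cpow_mul_exp_neg_mul_Ioi hs hr, mul_comm, one_div,
      inv_cpow _ _ (by simp [arg_ofReal_of_nonneg hr.le, pi_ne_zero.symm]), ← cpow_neg]
  have h_ofReal : Tendsto (fun r : ℝ ↦ (r : ℂ)) (𝓝[≠] 1) (𝓝[≠] 1) := by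
    refine tendsto_nhdsWithin_of_tendsto_nhds_of_eventually_within _ ?_ ?_
    · simpa using (continuous_ofReal.tendsto 1).mono_left nhdsWithin_le_nhds
    · exact eventually_nhdsWithin_of_forall fun r hr ↦ by simpa using hr
  refine hF.eqOn_of_preconnected_of_frequently_eq hG (convex_halfSpace_re_gt 0).isPreconnected
    (by simp : (1 : ℂ) ∈ {w : ℂ | 0 < w.re}) (h_ofReal.frequently ?_) hz
  exact ((eventually_nhdsWithin_of_eventually_nhds (eventually_gt_nhds one_pos)).mono
    h_real).frequently

lemma arg_eq_arctan_of_re_pos {z : ℂ} (hz : 0 < z.re) : arg z = Real.arctan (z.im / z.re) := by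
  have h := abs_lt.mp (abs_arg_lt_pi_div_two_iff.mpr (Or.inl hz))
  rw [← tan_arg, Real.arctan_tan h.1 h.2]

lemma im_sub_mul_I_cpow_neg {a : ℝ} (ha : 0 < a) (y s : ℝ) :
    (((a : ℂ) - y * I) ^ (-(s : ℂ))).im =
      (a ^ 2 + y ^ 2) ^ (-s / 2) * Real.sin (s * Real.arctan (y / a)) := by
  have hre : 0 < ((a : ℂ) - y * I).re := by simpa using ha
  have hnorm : ‖(a : ℂ) - y * I‖ = (a ^ 2 + y ^ 2) ^ (1 / 2 : ℝ) := by
    rw [← Real.sqrt_eq_rpow, Complex.norm_def, normSq_apply]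
    simp [sq]
  rw [← ofReal_neg, cpow_ofReal_im, hnorm, arg_eq_arctan_of_re_pos hre,
    ← Real.rpow_mul (by positivity)]
  simp [neg_div, Real.arctan_neg]
  ring_nf

lemma cpow_mul_cexp_neg_sub_mul_I {t : ℝ} (ht : 0 < t) (s a y : ℝ) :
    (t : ℂ) ^ (s : ℂ) * cexp (-(((a : ℂ) - y * I) * t)) =
      ((t ^ s * Real.exp (-(a * t)) * Real.cos (t * y) : ℝ) : ℂ) +
        ((t ^ s * Real.exp (-(a * t)) * Real.sin (t * y) : ℝ) : ℂ) * I := by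
  rw [← ofReal_cpow ht.le, show -(((a : ℂ) - y * I) * t) = ((-(a * t) : ℝ) : ℂ) + (t * y : ℝ) * I by
    push_cast; ring, Complex.exp_add, exp_mul_I, ← ofReal_exp, ← ofReal_cos, ← ofReal_sin]
  push_cast
  ring

section

variable {s a : ℝ}

theorem integral_rpow_mul_exp_neg_mul_cos_add_sin (hs : -1 < s) (ha : 0 < a) (y : ℝ) :
    ((∫ t in Ioi (0 : ℝ), t ^ s * Real.exp (-(a * t)) * Real.cos (t * y) : ℝ) : ℂ) +
        ((∫ t in Ioi (0 : ℝ), t ^ s * Real.exp (-(a * t)) * Real.sin (t * y) : ℝ) : ℂ) * I =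
      Complex.Gamma (s + 1) * ((a : ℂ) - y * I) ^ (-(s + 1 : ℂ)) := by
  have hre : 0 < ((a : ℂ) - y * I).re := by simpa using ha
  have hint := integrableOn_cpow_mul_cexp_neg_mul (s := s) (by simpa using hs) hre
  rw [← integral_cpow_mul_cexp_neg_mul_Ioi (by simp; linarith) hre, add_sub_cancel_right,
    ← setIntegral_re_add_im hint]
  congr 1
  · congr 1
    refine setIntegral_congr_fun measurableSet_Ioi fun t ht ↦ ?_
    rw [RCLike.re_to_complex, cpow_mul_cexp_neg_sub_mul_I ht]
    simp only [add_re, ofReal_re, ofReal_im, mul_re, I_re, I_im]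
    ring
  · congr 2
    refine setIntegral_congr_fun measurableSet_Ioi fun t ht ↦ ?_
    rw [RCLike.im_to_complex, cpow_mul_cexp_neg_sub_mul_I ht]
    simp only [add_im, ofReal_re, ofReal_im, mul_im, I_re, I_im]
    ring

lemma abs_rpow_mul_exp_neg_mul_sin_le {x : ℝ} (hx : 0 < x) (s a y : ℝ) :
    |x ^ s * Real.exp (-(a * x)) * Real.sin (x * y)| ≤
      |y| * (x ^ (s + 1) * Real.exp (-(a * x))) := by
  rw [abs_mul, abs_mul, abs_of_pos (Real.rpow_pos_of_pos hx s), abs_of_pos (Real.exp_pos _),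
    Real.rpow_add_one hx.ne']
  calc x ^ s * Real.exp (-(a * x)) * |Real.sin (x * y)|
      ≤ x ^ s * Real.exp (-(a * x)) * (x * |y|) := by
        gcongr
        exact Real.abs_sin_le_abs.trans (by rw [abs_mul, abs_of_pos hx])
    _ = |y| * (x ^ s * x * Real.exp (-(a * x))) := by ring

lemma integrableOn_rpow_sub_one_mul_exp_neg_mul_sin (hs : -1 < s) (ha : 0 < a) (y : ℝ) :
    IntegrableOn (fun x : ℝ ↦ x ^ (s - 1) * Real.exp (-(a * x)) * Real.sin (x * y)) (Ioi 0) := by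
  refine ((integrableOn_rpow_mul_exp_neg_mul hs ha).const_mul |y|).mono' ?_ ?_
  · refine ContinuousOn.aestronglyMeasurable (fun x hx ↦ ?_) measurableSet_Ioi
    have := Real.continuousAt_rpow_const x (s - 1) (Or.inl hx.out.ne')
    fun_prop
  · filter_upwards [ae_restrict_mem measurableSet_Ioi] with x hx
    simpa using abs_rpow_mul_exp_neg_mul_sin_le hx (s - 1) a y

theorem mul_integral_rpow_sub_one_mul_exp_neg_mul_sin (hs : -1 < s) (ha : 0 < a) (y : ℝ) :
    s * ∫ x in Ioi (0 : ℝ), x ^ (s - 1) * Real.exp (-(a * x)) * Real.sin (x * y) =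
      a * (∫ x in Ioi (0 : ℝ), x ^ s * Real.exp (-(a * x)) * Real.sin (x * y)) -
        y * ∫ x in Ioi (0 : ℝ), x ^ s * Real.exp (-(a * x)) * Real.cos (x * y) := by
  have hS : IntegrableOn (fun x ↦ x ^ s * Real.exp (-(a * x)) * Real.sin (x * y)) (Ioi 0) :=
    (integrableOn_rpow_mul_exp_neg_mul hs ha).mul_bdd
      (by fun_prop : Continuous _).aestronglyMeasurable (ae_of_all _ fun _ ↦ Real.abs_sin_le_one _)
  have hC : IntegrableOn (fun x ↦ x ^ s * Real.exp (-(a * x)) * Real.cos (x * y)) (Ioi 0) :=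
    (integrableOn_rpow_mul_exp_neg_mul hs ha).mul_bdd
      (by fun_prop : Continuous _).aestronglyMeasurable (ae_of_all _ fun _ ↦ Real.abs_cos_le_one _)
  have huv_le : ∀ x ∈ Ioi (0 : ℝ), ‖x ^ s * (Real.exp (-(a * x)) * Real.sin (x * y))‖ ≤
      |y| * (x ^ (s + 1) * Real.exp (-(a * x))) := fun x hx ↦ by
    simpa [mul_assoc] using abs_rpow_mul_exp_neg_mul_sin_le hx s a y
  have h_zero : Tendsto (fun x : ℝ ↦ |y| * (x ^ (s + 1) * Real.exp (-(a * x)))) (𝓝[>] 0)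
      (𝓝 0) := by
    have : ContinuousAt (fun x : ℝ ↦ |y| * (x ^ (s + 1) * Real.exp (-(a * x)))) 0 := by
      have := Real.continuousAt_rpow_const 0 (s + 1) (Or.inr (by linarith))
      fun_prop
    simpa [Real.zero_rpow (by linarith : s + 1 ≠ 0)] using
      this.tendsto.mono_left nhdsWithin_le_nhds
  have h_infty : Tendsto (fun x : ℝ ↦ |y| * (x ^ (s + 1) * Real.exp (-(a * x)))) atTop (𝓝 0) := by
    simpa using (tendsto_rpow_mul_exp_neg_mul_atTop_nhds_zero (s + 1) a ha).const_mul |y|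
  have hu : ∀ x ∈ Ioi (0 : ℝ), HasDerivAt (fun x ↦ x ^ s) (s * x ^ (s - 1)) x :=
    fun x hx ↦ Real.hasDerivAt_rpow_const (Or.inl hx.out.ne')
  have hv : ∀ x ∈ Ioi (0 : ℝ), HasDerivAt (fun x ↦ Real.exp (-(a * x)) * Real.sin (x * y))
      (Real.exp (-(a * x)) * -a * Real.sin (x * y) +
        Real.exp (-(a * x)) * (Real.cos (x * y) * y)) x := by
    intro x _
    have h1 : HasDerivAt (fun x ↦ -(a * x)) (-a) x := by
      simpa using ((hasDerivAt_id' x).const_mul a).fun_neg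
    have h2 : HasDerivAt (fun x ↦ x * y) y x := by simpa using (hasDerivAt_id x).mul_const y
    exact h1.exp.mul h2.sin
  have hparts := integral_Ioi_mul_deriv_eq_deriv_mul hu hv
    (IntegrableOn.congr_fun ((hS.const_mul (-a)).add (hC.const_mul y))
      (fun x _ ↦ by simp only [Pi.add_apply, Pi.mul_apply]; ring) measurableSet_Ioi)
    (IntegrableOn.congr_fun ((integrableOn_rpow_sub_one_mul_exp_neg_mul_sin hs ha y).const_mul s)
      (fun x _ ↦ by simp only [Pi.mul_apply]; ring) measurableSet_Ioi)
    (squeeze_zero_norm' (eventually_nhdsWithin_of_forall huv_le) h_zero)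
    (squeeze_zero_norm' ((eventually_gt_atTop 0).mono huv_le) h_infty)
  calc s * ∫ x in Ioi (0 : ℝ), x ^ (s - 1) * Real.exp (-(a * x)) * Real.sin (x * y)
      = ∫ x in Ioi (0 : ℝ), s * x ^ (s - 1) * (Real.exp (-(a * x)) * Real.sin (x * y)) := by
        rw [← integral_const_mul]
        simp only [mul_assoc]
    _ = -∫ x in Ioi (0 : ℝ), x ^ s * (Real.exp (-(a * x)) * -a * Real.sin (x * y) +
          Real.exp (-(a * x)) * (Real.cos (x * y) * y)) := by
        rw [hparts]; ring
    _ = _ := by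
      rw [← integral_neg, ← integral_const_mul, ← integral_const_mul,
        ← integral_sub (hS.const_mul a) (hC.const_mul y)]
      congr 1 with x
      ring

end

theorem stmt4 (a y η : ℝ) (ha : 0 < a) (hη : -1 < η) (hη0 : η ≠ 0) :
    (∫ x in Ioi (0 : ℝ), x ^ (η - 1) * Real.exp (-(a * x)) * Real.sin (x * y)) =
      Real.Gamma η * (a ^ 2 + y ^ 2) ^ (-η / 2) * Real.sin (η * Real.arctan (y / a)) := by
  have hz : (a : ℂ) - y * I ≠ 0 := fun h ↦ by simpa [ha.ne'] using congrArg re h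
  have hpow : ((a : ℂ) - y * I) * ((a : ℂ) - y * I) ^ (-(η + 1 : ℂ)) =
      ((a : ℂ) - y * I) ^ (-(η : ℂ)) := by
    conv_lhs => enter [1]; rw [← cpow_one ((a : ℂ) - y * I)]
    rw [← cpow_add _ _ hz]
    ring_nf
  have hΓ : Complex.Gamma (η + 1) = Real.Gamma (η + 1) := by
    exact_mod_cast Complex.Gamma_ofReal (η + 1)
  -- imaginary part of `z * (C + S i) = Γ(η + 1) z ^ (-η)` for `z = a - y i`
  have him := congrArg (fun w ↦ (((a : ℂ) - y * I) * w).im)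
    (integral_rpow_mul_exp_neg_mul_cos_add_sin hη ha y)
  simp only [mul_left_comm ((a : ℂ) - y * I), hpow, hΓ, im_ofReal_mul,
    im_sub_mul_I_cpow_neg ha] at him
  simp only [mul_im, mul_re, add_re, add_im, sub_re, sub_im, ofReal_re, ofReal_im, I_re, I_im] at him
  refine mul_left_cancel₀ hη0 ?_
  rw [mul_integral_rpow_sub_one_mul_exp_neg_mul_sin hη ha y, ← mul_assoc, ← mul_assoc,
    ← Real.Gamma_add_one hη0, mul_assoc, ← him]
  ring
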